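/- For a profile φ of length n ≥ 2k log k and any β-approximate PML distribution p^β_φ (with β ≥ exp(−εk log k), and all nonzero probabilities at least 1/k), we have Distinct(φ) ≤ S(p^β_φ) ≤ Distinct(φ) + εk. -/

import Mathlib

/-!
A sequence of positive probability with profile `φ` uses exactly `Distinct n φ` symbols, all
in the support of `p`; this is the lower bound. For the upper bound, split `P(p, φ)` according
to the set `T` of symbols used. The part coming from `T` is `p(T)^n` times the probability of
`φ` under `p` conditioned on `T`, an admissible distribution, hence at most `P(p, φ) / β`. If
the support exceeds `Distinct n φ` by `m`, then `p(T) ≤ 1 - m/k` and there are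
`C(S, m) ≤ k^m` choices of `T`, so
`P(p, φ) ≤ k^m e^{-nm/k} P(p, φ) / β ≤ e^{-m log k} P(p, φ) / β`,
which is less than `P(p, φ)` as soon as `m > εk`.
-/

open Finset
open scoped BigOperators Classical

namespace PML

noncomputable section

variable {D : Type*} [Fintype D] [DecidableEq D]

/-- `p` is a probability distribution on the finite domain `D`. -/
def IsDist (p : D → ℝ) : Prop := (∀ x, 0 ≤ p x) ∧ ∑ x, p x = 1

/-- Probability of observing the sequence `y` of `n` i.i.d. samples from `p`. -/
def seqProb (n : ℕ) (p : D → ℝ) (y : Fin n → D) : ℝ := ∏ i, p (y i)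

/-- Probability of an event over sequences of `n` i.i.d. samples from `p`. -/
def prEvent (n : ℕ) (p : D → ℝ) (P : (Fin n → D) → Prop) : ℝ :=
  ∑ y : Fin n → D, if P y then seqProb n p y else 0

/-- Frequency (multiplicity) of symbol `x` in the sequence `y`. -/
def freq (n : ℕ) (y : Fin n → D) (x : D) : ℕ :=
  (Finset.univ.filter (fun i => y i = x)).card

/-- The `S`-pseudo profile of the sequence `y`: the number of elements of `S`
with frequency `j`. -/
def profS (n : ℕ) (S : Finset D) (y : Fin n → D) : ℕ → ℕ :=
  fun j => (S.filter (fun x => freq n y x = j)).card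

/-- Probability under `p` of observing the `S`-pseudo profile `φ` (on positive
frequencies). -/
def profProb (n : ℕ) (p : D → ℝ) (S : Finset D) (φ : ℕ → ℕ) : ℝ :=
  ∑ y : Fin n → D, if (∀ j, 1 ≤ j → profS n S y j = φ j) then seqProb n p y else 0

/-- The set of distinct (positive) frequencies appearing in a profile `φ`. -/
def Freqs (φ : ℕ → ℕ) : Set ℕ := {j | 1 ≤ j ∧ φ j ≠ 0}

def Distinct (n : ℕ) (φ : ℕ → ℕ) : ℕ := ∑ j ∈ Finset.Icc 1 n, φ j

def suppF (p : D → ℝ) : Finset D := Finset.univ.filter (fun x => p x ≠ 0)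

def Constr (k : ℕ) (p : D → ℝ) : Prop :=
  IsDist p ∧ ∀ x, p x ≠ 0 → 1 / (k : ℝ) ≤ p x

def HasProfile (n : ℕ) (φ : ℕ → ℕ) (y : Fin n → D) : Prop :=
  ∀ j, 1 ≤ j → profS n univ y j = φ j

def condOn (p : D → ℝ) (T : Finset D) : D → ℝ :=
  fun x => if x ∈ T then p x / ∑ z ∈ T, p z else 0

section

variable {n k : ℕ} {p : D → ℝ} {φ : ℕ → ℕ} {y : Fin n → D} {T : Finset D}

lemma profProb_univ_eq (n : ℕ) (p : D → ℝ) (φ : ℕ → ℕ) :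
    profProb n p univ φ = ∑ y, if HasProfile n φ y then seqProb n p y else 0 :=
  rfl

omit [Fintype D] [DecidableEq D] in
lemma seqProb_nonneg (hp : ∀ x, 0 ≤ p x) (n : ℕ) (y : Fin n → D) : 0 ≤ seqProb n p y :=
  prod_nonneg fun i _ => hp (y i)

lemma profProb_nonneg (hp : ∀ x, 0 ≤ p x) (n : ℕ) (S : Finset D) (φ : ℕ → ℕ) :
    0 ≤ profProb n p S φ :=
  sum_nonneg fun y _ => by
    split_ifs
    · exact seqProb_nonneg hp n y
    · exact le_rfl

lemma exists_hasProfile_of_profProb_ne_zero (h : profProb n p univ φ ≠ 0) :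
    ∃ y, HasProfile n φ y ∧ seqProb n p y ≠ 0 := by
  rw [profProb_univ_eq] at h
  obtain ⟨y, -, hy⟩ := exists_ne_zero_of_sum_ne_zero h
  by_cases hφ : HasProfile n φ y
  · exact ⟨y, hφ, by rwa [if_pos hφ] at hy⟩
  · exact absurd (if_neg hφ) hy

lemma image_subset_suppF_of_seqProb_ne_zero (h : seqProb n p y ≠ 0) :
    univ.image y ⊆ suppF p := by
  intro x hx
  obtain ⟨i, -, rfl⟩ := mem_image.mp hx
  simpa [suppF] using prod_ne_zero_iff.mp h i (mem_univ i)

omit [Fintype D] in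
lemma freq_pos_iff {x : D} : 0 < freq n y x ↔ x ∈ univ.image y := by
  simp [freq, card_pos, filter_nonempty_iff]

lemma card_image_eq_distinct (hy : HasProfile n φ y) : #(univ.image y) = Distinct n φ := by
  have hfreq : ∀ x ∈ univ.image y, freq n y x ∈ Icc 1 n := fun x hx =>
    mem_Icc.mpr ⟨freq_pos_iff.mpr hx, (card_filter_le _ _).trans (by simp)⟩
  rw [card_eq_sum_card_fiberwise hfreq, Distinct]
  refine sum_congr rfl fun j hj => ?_
  rw [← hy j (mem_Icc.mp hj).1, profS]
  congr 1
  ext x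
  simp only [mem_filter, mem_univ, true_and, and_iff_right_iff_imp]
  rintro rfl
  exact freq_pos_iff.mp (mem_Icc.mp hj).1

lemma distinct_le_card_suppF (h : profProb n p univ φ ≠ 0) : Distinct n φ ≤ #(suppF p) := by
  obtain ⟨y, hy, hseq⟩ := exists_hasProfile_of_profProb_ne_zero h
  exact card_image_eq_distinct hy ▸ card_le_card (image_subset_suppF_of_seqProb_ne_zero hseq)

lemma distinct_pos (hn : 0 < n) (h : profProb n p univ φ ≠ 0) : 0 < Distinct n φ := by
  obtain ⟨y, hy, -⟩ := exists_hasProfile_of_profProb_ne_zero h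
  exact card_image_eq_distinct hy ▸ 
    card_pos.mpr ⟨y ⟨0, hn⟩, mem_image_of_mem y (mem_univ _)⟩

omit [DecidableEq D] in
lemma card_div_le_sum_of_subset_suppF (hc : Constr k p) {A : Finset D} (hA : A ⊆ suppF p) :
    (#A : ℝ) / k ≤ ∑ x ∈ A, p x := by
  have := card_nsmul_le_sum A p (1 / k) fun x hx => hc.2 x (by simpa [suppF] using hA hx)
  rwa [nsmul_eq_mul, mul_one_div] at this

omit [DecidableEq D] in
lemma sum_suppF_eq_one (hc : Constr k p) : ∑ x ∈ suppF p, p x = 1 :=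
  (sum_filter_ne_zero _).trans hc.1.2

omit [DecidableEq D] in
lemma card_suppF_le (hc : Constr k p) (hk : 0 < k) : #(suppF p) ≤ k := by
  have := card_div_le_sum_of_subset_suppF hc subset_rfl
  rw [sum_suppF_eq_one hc, div_le_one (by positivity)] at this
  exact_mod_cast this

lemma sum_le_one_sub_card_sdiff_div (hc : Constr k p) (hT : T ⊆ suppF p) :
    ∑ x ∈ T, p x ≤ 1 - #(suppF p \ T) / k := by
  have := card_div_le_sum_of_subset_suppF hc (sdiff_subset (s := suppF p) (t := T))
  linarith [sum_sdiff hT (f := p), sum_suppF_eq_one hc]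

omit [DecidableEq D] in
lemma sum_pos_of_subset_suppF (hp : ∀ x, 0 ≤ p x) (hT : T ⊆ suppF p) (hne : T.Nonempty) :
    0 < ∑ x ∈ T, p x :=
  sum_pos (fun x hx => (hp x).lt_of_ne' (by simpa [suppF] using hT hx)) hne

omit [Fintype D] in
lemma condOn_nonneg (hp : ∀ x, 0 ≤ p x) (x : D) : 0 ≤ condOn p T x := by
  unfold condOn
  split_ifs
  · exact div_nonneg (hp x) (sum_nonneg fun z _ => hp z)
  · exact le_rfl

lemma constr_condOn (hc : Constr k p) (hT : T ⊆ suppF p) (hne : T.Nonempty) :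
    Constr k (condOn p T) := by
  have hs := sum_pos_of_subset_suppF hc.1.1 hT hne
  have hs1 : ∑ x ∈ T, p x ≤ 1 := by
    have : (0 : ℝ) ≤ #(suppF p \ T) / k := by positivity
    linarith [sum_le_one_sub_card_sdiff_div hc hT]
  refine ⟨⟨fun x => condOn_nonneg hc.1.1 x, ?_⟩, fun x hx => ?_⟩
  · simp only [condOn, sum_ite_mem, univ_inter, ← sum_div, div_self hs.ne']
  · have hxT : x ∈ T := by
      by_contra h
      simp [condOn, h] at hx
    simp only [condOn, if_pos hxT] at hx ⊢
    calc 1 / (k : ℝ) ≤ p x := hc.2 x (by simpa [suppF] using hT hxT)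
      _ ≤ p x / ∑ x ∈ T, p x := le_div_self (hc.1.1 x) hs hs1

omit [Fintype D] in
lemma seqProb_eq_pow_mul_seqProb_condOn (hs : ∑ x ∈ T, p x ≠ 0) (hy : ∀ i, y i ∈ T) :
    seqProb n p y = (∑ x ∈ T, p x) ^ n * seqProb n (condOn p T) y := by
  simp only [seqProb, condOn, if_pos (hy _), prod_div_distrib, prod_const, card_univ,
    Fintype.card_fin, mul_div_cancel₀ _ (pow_ne_zero n hs)]

lemma profProb_le_sum_powersetCard (hp : ∀ x, 0 ≤ p x) (hd : 0 < Distinct n φ) :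
    profProb n p univ φ ≤ ∑ T ∈ (suppF p).powersetCard (Distinct n φ),
      (∑ x ∈ T, p x) ^ n * profProb n (condOn p T) univ φ := by
  set A := (suppF p).powersetCard (Distinct n φ)
  set f := fun (q : D → ℝ) (y : Fin n → D) => if HasProfile n φ y then seqProb n q y else 0
  have hA : ∀ y, f p y ≠ 0 → univ.image y ∈ A := by
    intro y hy
    by_cases hφ : HasProfile n φ y
    · have hseq : seqProb n p y ≠ 0 := by simpa [f, hφ] using hy
      exact mem_powersetCard.mpr
        ⟨image_subset_suppF_of_seqProb_ne_zero hseq, card_image_eq_distinct hφ⟩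
    · simp [f, hφ] at hy
  rw [profProb_univ_eq, ← sum_filter_of_ne fun y _ => hA y,
    ← sum_fiberwise_of_maps_to (g := fun y => univ.image y) fun y hy => (mem_filter.mp hy).2]
  refine sum_le_sum fun T hT => ?_
  obtain ⟨hTs, hTd⟩ := mem_powersetCard.mp hT
  have hs := sum_pos_of_subset_suppF hp hTs (card_pos.mp (hTd ▸ hd))
  calc ∑ y ∈ _ with univ.image y = T, f p y
      = ∑ y ∈ _ with univ.image y = T, (∑ x ∈ T, p x) ^ n * f (condOn p T) y := by
        refine sum_congr rfl fun y hy => ?_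
        have hyT : ∀ i, y i ∈ T := fun i =>
          (mem_filter.mp hy).2 ▸ mem_image_of_mem y (mem_univ i)
        by_cases hφ : HasProfile n φ y
        · simp only [f, if_pos hφ, seqProb_eq_pow_mul_seqProb_condOn hs.ne' hyT]
        · simp only [f, if_neg hφ, mul_zero]
    _ ≤ ∑ y, (∑ x ∈ T, p x) ^ n * f (condOn p T) y := by
        refine sum_le_sum_of_subset_of_nonneg (subset_univ _) fun y _ _ => ?_
        refine mul_nonneg (pow_nonneg hs.le n) ?_
        by_cases hφ : HasProfile n φ y
        · simpa only [f, if_pos hφ] using seqProb_nonneg (condOn_nonneg hp) n y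
        · simp only [f, if_neg hφ, le_refl]
    _ = (∑ x ∈ T, p x) ^ n * profProb n (condOn p T) univ φ := by
        rw [← mul_sum]
        rfl

lemma profProb_le_choose_mul (hc : Constr k p) (hd : 0 < Distinct n φ) {M : ℝ}
    (hM : ∀ q : D → ℝ, Constr k q → profProb n q univ φ ≤ M) :
    profProb n p univ φ ≤ (#(suppF p)).choose (Distinct n φ) *
      ((1 - ((#(suppF p) - Distinct n φ : ℕ) : ℝ) / k) ^ n * M) := by
  calc profProb n p univ φ
      ≤ ∑ T ∈ (suppF p).powersetCard (Distinct n φ),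
          (∑ x ∈ T, p x) ^ n * profProb n (condOn p T) univ φ :=
        profProb_le_sum_powersetCard hc.1.1 hd
    _ ≤ ∑ T ∈ (suppF p).powersetCard (Distinct n φ),
          (1 - ((#(suppF p) - Distinct n φ : ℕ) : ℝ) / k) ^ n * M := by
        refine sum_le_sum fun T hT => ?_
        obtain ⟨hTs, hTd⟩ := mem_powersetCard.mp hT
        have hne := card_pos.mp (hTd ▸ hd)
        have hs := sum_pos_of_subset_suppF hc.1.1 hTs hne
        have hsle := sum_le_one_sub_card_sdiff_div hc hTs
        rw [card_sdiff_of_subset hTs, hTd] at hsle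
        exact mul_le_mul (pow_le_pow_left₀ hs.le hsle n) (hM _ (constr_condOn hc hTs hne))
          (profProb_nonneg (condOn_nonneg hc.1.1) ..) (pow_nonneg (hs.le.trans hsle) n)
    _ = _ := by rw [sum_const, card_powersetCard, nsmul_eq_mul]

end

lemma choose_mul_one_sub_div_pow_le_exp {k n S m : ℕ} (hk : 1 < k)
    (hn : 2 * (k : ℝ) * Real.log k ≤ n) (hmS : m ≤ S) (hSk : S ≤ k) :
    (S.choose m : ℝ) * (1 - m / k) ^ n ≤ Real.exp (-(m * Real.log k)) := by
  have hk0 : (0 : ℝ) < k := by positivity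
  have hmk : (m : ℝ) / k ≤ 1 := (div_le_one hk0).mpr (by exact_mod_cast hmS.trans hSk)
  have hchoose : (S.choose m : ℝ) ≤ Real.exp (m * Real.log k) := by
    rw [Real.exp_nat_mul, Real.exp_log hk0]
    exact_mod_cast (S.choose_le_pow m).trans (Nat.pow_le_pow_left hSk m)
  have hpow : (1 - (m : ℝ) / k) ^ n ≤ Real.exp (-(n * (m / k))) := by
    rw [neg_mul_eq_mul_neg, Real.exp_nat_mul]
    exact pow_le_pow_left₀ (by linarith) (by linarith [Real.add_one_le_exp (-(m / k : ℝ))]) n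
  have hexp : 2 * (m * Real.log k) ≤ n * (m / k) := by
    calc 2 * (m * Real.log k) = 2 * k * Real.log k * (m / k) := by field_simp
      _ ≤ n * (m / k) := mul_le_mul_of_nonneg_right hn (by positivity)
  calc (S.choose m : ℝ) * (1 - m / k) ^ n
      ≤ Real.exp (m * Real.log k) * Real.exp (-(n * (m / k))) :=
        mul_le_mul hchoose hpow (pow_nonneg (by linarith) n) (Real.exp_pos _).le
    _ ≤ Real.exp (-(m * Real.log k)) := by
        rw [← Real.exp_add]
        exact Real.exp_le_exp.mpr (by linarith)

theorem approx_pml_support_bounds_general (k n : ℕ) (hk : 2 ≤ k)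
    (hn : 2 * (k : ℝ) * Real.log k ≤ n)
    (ε β : ℝ)
    (hβ : Real.exp (-(ε * k * Real.log k)) ≤ β)
    (φ : ℕ → ℕ) (pβφ : D → ℝ) (hc : Constr k pβφ)
    (happrox : ∀ q : D → ℝ, Constr k q →
      β * profProb n q Finset.univ φ ≤ profProb n pβφ Finset.univ φ)
    (hpos : 0 < profProb n pβφ Finset.univ φ) :
    Distinct n φ ≤ (suppF pβφ).card ∧
      ((suppF pβφ).card : ℝ) ≤ Distinct n φ + ε * k := by
  have hlog : 0 < Real.log k := Real.log_pos (by exact_mod_cast hk)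
  have hn0 : 0 < n := by exact_mod_cast (by positivity : (0 : ℝ) < 2 * k * Real.log k).trans_le hn
  have hβ0 : 0 < β := (Real.exp_pos _).trans_le hβ
  have hdS := distinct_le_card_suppF hpos.ne'
  refine ⟨hdS, ?_⟩
  by_contra! hgap
  have hm : ε * k < ((#(suppF pβφ) - Distinct n φ : ℕ) : ℝ) := by
    rw [Nat.cast_sub hdS]
    linarith
  have hbound := profProb_le_choose_mul hc (distinct_pos hn0 hpos.ne')
    fun q hq => (le_div_iff₀' hβ0).mpr (happrox q hq)
  have hsmall : ((#(suppF pβφ)).choose (Distinct n φ) : ℝ) *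
      (1 - ((#(suppF pβφ) - Distinct n φ : ℕ) : ℝ) / k) ^ n < β := by
    rw [← Nat.choose_symm hdS]
    calc _ ≤ Real.exp (-((#(suppF pβφ) - Distinct n φ : ℕ) * Real.log k)) :=
          choose_mul_one_sub_div_pow_le_exp (by omega) hn (Nat.sub_le _ _)
            (card_suppF_le hc (by omega))
      _ < Real.exp (-(ε * k * Real.log k)) := by gcongr
      _ ≤ β := hβ
  have := mul_lt_mul_of_pos_right hsmall (div_pos hpos hβ0)
  rw [mul_div_cancel₀ _ hβ0.ne', mul_assoc] at this
  linarith

/-- For a profile `φ` of length `n ≥ 2k log k` and any `β`-approximate PML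
distribution `p^β_φ` (with `β ≥ e^{−εk log k}`, all nonzero probabilities at
least `1/k`, and `P(p^β_φ, φ) > 0`), one has
`Distinct(φ) ≤ S(p^β_φ) ≤ Distinct(φ) + εk`. -/
theorem approx_pml_support_bounds (k n : ℕ) (hk : 2 ≤ k)
    (hn : 2 * (k : ℝ) * Real.log k ≤ n)
    (ε β : ℝ) (hε : 0 < ε)
    (hβ : Real.exp (-(ε * k * Real.log k)) ≤ β)
    (φ : ℕ → ℕ) (pβφ : D → ℝ) (hc : Constr k pβφ)
    (happrox : ∀ q : D → ℝ, Constr k q →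
      β * profProb n q Finset.univ φ ≤ profProb n pβφ Finset.univ φ)
    (hpos : 0 < profProb n pβφ Finset.univ φ) :
    Distinct n φ ≤ (suppF pβφ).card ∧
      ((suppF pβφ).card : ℝ) ≤ Distinct n φ + ε * k :=
  approx_pml_support_bounds_general k n hk hn ε β hβ φ pβφ hc happrox hpos

end

end PML
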